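/- arXiv:1305.4850 — 3 statements merged into one kernel-verified Lean document; each statement's English description precedes it below -/
import Mathlib

section
/- For all integers r ≥ 1 and n ≥ 1, the number of functions σ : ℤ/nℤ → ℤ/2rℤ satisfying σ(i+1) ≠ σ(i) + r for every i ∈ ℤ/nℤ equals (2r−1)^n + r + (r−1)(−1)^n. (In particular, the number of cyclically admissible words #W_n of length n on 2r symbols is (2r−1)^n + O(1) as n → ∞.) -/
open Finset

/-- Number of `n`-tuples of elements of `ZMod (2r) \ {r}` summing to `x`. -/
def Fcnt (r n : ℕ) [NeZero r] (x : ZMod (2*r)) : ℕ :=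
  Fintype.card {d : Fin n → ZMod (2*r) // (∀ i, d i ≠ (r : ZMod (2*r))) ∧ ∑ i, d i = x}

lemma rne (r : ℕ) [NeZero r] : (r : ZMod (2*r)) ≠ 0 := by
  rw [Ne, ZMod.natCast_eq_zero_iff]
  intro h
  have h2 := Nat.le_of_dvd (Nat.pos_of_ne_zero (NeZero.ne r)) h
  have := Nat.pos_of_ne_zero (NeZero.ne r)
  omega

lemma negr (r : ℕ) [NeZero r] : -(r : ZMod (2*r)) = r := by
  have : ((2*r : ℕ) : ZMod (2*r)) = 0 := ZMod.natCast_self _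
  push_cast at this
  linear_combination -this

lemma sum_Fcnt (r n : ℕ) [NeZero r] : ∑ x : ZMod (2*r), Fcnt r n x = (2*r-1)^n := by
  have h1 : Fintype.card {d : Fin n → ZMod (2*r) // ∀ i, d i ≠ (r : ZMod (2*r))} = (2*r-1)^n := by
    have e := Equiv.subtypePiEquivPi (p := fun (_ : Fin n) (x : ZMod (2*r)) => x ≠ r)
    rw [Fintype.card_congr e]
    simp [Fintype.card_subtype_compl, Fintype.card_subtype_eq, ZMod.card]
  rw [← h1]
  have e2 := (Equiv.sigmaFiberEquiv
    (fun d : {d : Fin n → ZMod (2*r) // ∀ i, d i ≠ (r : ZMod (2*r))} => ∑ i, d.1 i))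
  rw [Fintype.card_congr e2.symm, Fintype.card_sigma]
  refine Finset.sum_congr rfl fun x _ => ?_
  unfold Fcnt
  rw [Fintype.card_congr (Equiv.subtypeSubtypeEquivSubtypeInter
    (fun d : Fin n → ZMod (2*r) => ∀ i, d i ≠ (r : ZMod (2*r))) (fun d => ∑ i, d i = x))]

lemma fiber_card (r n : ℕ) [NeZero r] (x s : ZMod (2*r)) :
    Fintype.card {d : Fin (n+1) → ZMod (2*r) //
        ((∀ i, d i ≠ (r : ZMod (2*r))) ∧ ∑ i, d i = x) ∧ d 0 = s} =
      if s = (r : ZMod (2*r)) then 0 else Fcnt r n (x - s) := by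
  split_ifs with hs
  · rw [Fintype.card_eq_zero_iff]
    constructor
    rintro ⟨d, ⟨h1, _⟩, h3⟩
    exact h1 0 (by rw [h3, hs])
  · rw [Fcnt]
    apply Fintype.card_congr
    refine ⟨fun d => ⟨Fin.tail d.1, ?_, ?_⟩, fun t => ⟨Fin.cons s t.1, ⟨?_, ?_⟩, ?_⟩, ?_, ?_⟩
    · intro i; exact d.2.1.1 i.succ
    · have := d.2.1.2
      rw [Fin.sum_univ_succ] at this
      rw [show ∑ i, Fin.tail d.1 i = ∑ i : Fin n, d.1 i.succ from rfl]
      rw [d.2.2] at this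
      linear_combination this
    · intro i
      refine Fin.cases ?_ ?_ i
      · simpa using hs
      · intro j; simpa using t.2.1 j
    · rw [Fin.sum_univ_succ]
      simp only [Fin.cons_zero, Fin.cons_succ]
      rw [show ∑ i : Fin n, t.1 i = x - s from t.2.2]
      ring
    · simp
    · intro d
      ext i
      simp [← d.2.2, Fin.cons_self_tail]
    · intro t
      ext i
      simp [Fin.tail]

lemma Fcnt_rec (r n : ℕ) [NeZero r] (x : ZMod (2*r)) :
    Fcnt r (n+1) x + Fcnt r n (x - r) = (2*r-1)^n := by
  have h1 : Fcnt r (n+1) x = ∑ s : ZMod (2*r),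
      Fintype.card {d : Fin (n+1) → ZMod (2*r) //
        ((∀ i, d i ≠ (r : ZMod (2*r))) ∧ ∑ i, d i = x) ∧ d 0 = s} := by
    rw [Fcnt]
    have e2 := (Equiv.sigmaFiberEquiv
      (fun d : {d : Fin (n+1) → ZMod (2*r) //
          (∀ i, d i ≠ (r : ZMod (2*r))) ∧ ∑ i, d i = x} => d.1 0))
    rw [Fintype.card_congr e2.symm, Fintype.card_sigma]
    refine Finset.sum_congr rfl fun s _ => ?_
    exact Fintype.card_congr (Equiv.subtypeSubtypeEquivSubtypeInter
      (fun d : Fin (n+1) → ZMod (2*r) => (∀ i, d i ≠ (r : ZMod (2*r))) ∧ ∑ i, d i = x)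
      (fun d => d 0 = s))
  rw [h1]
  simp only [fiber_card]
  have h2 : ∑ s : ZMod (2*r), ((if s = (r : ZMod (2*r)) then 0 else Fcnt r n (x - s))
      + if s = (r : ZMod (2*r)) then Fcnt r n (x - s) else 0) = (2*r-1)^n := by
    have : ∀ s : ZMod (2*r), ((if s = (r : ZMod (2*r)) then 0 else Fcnt r n (x - s))
      + if s = (r : ZMod (2*r)) then Fcnt r n (x - s) else 0) = Fcnt r n (x - s) := by
      intro s; split_ifs <;> simp
    simp only [this]
    rw [← sum_Fcnt r n]
    exact Fintype.sum_equiv (Equiv.subLeft x) _ _ (fun s => rfl)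
  rw [Finset.sum_add_distrib, Finset.sum_ite_eq' Finset.univ (r : ZMod (2*r))] at h2
  simpa using h2

lemma Fcnt_zero_zero (r : ℕ) [NeZero r] : Fcnt r 0 (0 : ZMod (2*r)) = 1 := by
  rw [Fcnt, Fintype.card_eq_one_iff]
  refine ⟨⟨fun i => i.elim0, fun i => i.elim0, by simp⟩, ?_⟩
  rintro ⟨d, hd⟩
  ext i
  exact i.elim0

lemma Fcnt_zero_r (r : ℕ) [NeZero r] : Fcnt r 0 ((r : ℕ) : ZMod (2*r)) = 0 := by
  rw [Fcnt, Fintype.card_eq_zero_iff]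
  constructor
  rintro ⟨d, -, hd⟩
  simp at hd
  exact rne r hd.symm

lemma Fcnt_closed (r : ℕ) [NeZero r] (n : ℕ) :
    (2*(r:ℤ)) * Fcnt r n 0 = (2*(r:ℤ)-1)^n + r + ((r:ℤ)-1)*(-1)^n ∧
    (2*(r:ℤ)) * Fcnt r n ((r : ℕ) : ZMod (2*r)) = (2*(r:ℤ)-1)^n - r + ((r:ℤ)-1)*(-1)^n := by
  have hr : 1 ≤ r := Nat.one_le_iff_ne_zero.2 (NeZero.ne r)
  induction n with
  | zero =>
    rw [Fcnt_zero_zero, Fcnt_zero_r]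
    constructor <;> push_cast <;> ring
  | succ n ih =>
    obtain ⟨ih0, ihr⟩ := ih
    have cast1 : ((2*r-1 : ℕ) : ℤ) = 2*(r:ℤ) - 1 := by
      push_cast [Nat.cast_sub (by omega : 1 ≤ 2*r)]; ring
    have h0 := Fcnt_rec r n (0 : ZMod (2*r))
    rw [zero_sub, negr] at h0
    have hrr := Fcnt_rec r n ((r:ℕ) : ZMod (2*r))
    rw [sub_self] at hrr
    have h0' : (Fcnt r (n+1) (0 : ZMod (2*r)) : ℤ) =
        (2*(r:ℤ)-1)^n - Fcnt r n ((r:ℕ) : ZMod (2*r)) := by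
      have := congrArg (Nat.cast : ℕ → ℤ) h0
      push_cast at this
      rw [← cast1]
      linarith
    have hr' : (Fcnt r (n+1) ((r:ℕ) : ZMod (2*r)) : ℤ) =
        (2*(r:ℤ)-1)^n - Fcnt r n (0 : ZMod (2*r)) := by
      have := congrArg (Nat.cast : ℕ → ℤ) hrr
      push_cast at this
      rw [← cast1]
      linarith
    constructor
    · rw [h0', mul_sub, ihr]
      ring
    · rw [hr', mul_sub, ih0]
      ring

lemma card_cyclic (r m : ℕ) [NeZero r] :
    Nat.card {σ : ZMod (m+1) → ZMod (2*r) //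
        ∀ i : ZMod (m+1), σ (i + 1) ≠ σ i + (r : ZMod (2*r))} = 2*r * Fcnt r (m+1) 0 := by
  set n := m + 1 with hn
  set c : Fin n → ZMod n := fun i => (i.1 : ZMod n) with hc
  have hcv : ∀ i : Fin n, (c i).val = i.1 := fun i => ZMod.val_cast_of_lt i.2
  set Φ : {σ : ZMod n → ZMod (2*r) // ∀ i : ZMod n, σ (i + 1) ≠ σ i + (r : ZMod (2*r))} →
      ZMod (2*r) × {d : Fin n → ZMod (2*r) // (∀ i, d i ≠ (r : ZMod (2*r))) ∧ ∑ i, d i = 0} :=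
    fun σ => (σ.1 0, ⟨fun i => σ.1 (c i + 1) - σ.1 (c i),
      fun i => by
        intro h
        exact σ.2 (c i) (by linear_combination h),
      by
        have h1 : ∑ i : Fin n, σ.1 (c i + 1) = ∑ j : ZMod n, σ.1 (j + 1) := by
          apply Fintype.sum_bijective c
          · rw [Fintype.bijective_iff_injective_and_card]
            refine ⟨fun i j hij => Fin.ext ?_, by simp [ZMod.card]⟩
            rw [← hcv i, ← hcv j, hij]
          · intro i; rfl
        have h2 : ∑ i : Fin n, σ.1 (c i) = ∑ j : ZMod n, σ.1 j := by
          apply Fintype.sum_bijective c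
          · rw [Fintype.bijective_iff_injective_and_card]
            refine ⟨fun i j hij => Fin.ext ?_, by simp [ZMod.card]⟩
            rw [← hcv i, ← hcv j, hij]
          · intro i; rfl
        have h3 : ∑ j : ZMod n, σ.1 (j + 1) = ∑ j : ZMod n, σ.1 j :=
          Fintype.sum_equiv (Equiv.addRight 1) _ _ (fun j => rfl)
        rw [Finset.sum_sub_distrib, h1, h2, h3, sub_self]⟩) with hΦ
  have hinj : Function.Injective Φ := by
    rintro σ τ h
    have h0 : σ.1 0 = τ.1 0 := congrArg Prod.fst h
    have hd : ∀ i : Fin n, σ.1 (c i + 1) - σ.1 (c i) = τ.1 (c i + 1) - τ.1 (c i) := by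
      intro i
      exact congrFun (congrArg Subtype.val (congrArg Prod.snd h)) i
    have key : ∀ k : ℕ, k < n → σ.1 ((k : ℕ) : ZMod n) = τ.1 ((k : ℕ) : ZMod n) := by
      intro k
      induction k with
      | zero => intro _; simpa using h0
      | succ k ih =>
        intro hk1
        have hk : k < n := by omega
        have hdi := hd ⟨k, hk⟩
        have hci : c ⟨k, hk⟩ = ((k : ℕ) : ZMod n) := rfl
        rw [hci, ih hk] at hdi
        have : σ.1 (((k : ℕ) : ZMod n) + 1) = τ.1 (((k : ℕ) : ZMod n) + 1) := sub_left_inj.mp hdi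
        rwa [show (((k : ℕ) : ZMod n) + 1) = (((k+1 : ℕ)) : ZMod n) by push_cast; ring] at this
    apply Subtype.ext
    funext j
    have := key j.val (ZMod.val_lt j)
    rwa [ZMod.natCast_zmod_val j] at this
  have hsurj : Function.Surjective Φ := by
    rintro ⟨a, d, hd1, hd2⟩
    set σ : ZMod n → ZMod (2*r) :=
      fun j => a + ∑ i ∈ Finset.univ.filter (fun i : Fin n => i.1 < j.val), d i with hσ
    have σ0 : σ 0 = a := by
      rw [hσ]
      simp only
      rw [show Finset.univ.filter (fun i : Fin n => i.1 < (0 : ZMod n).val) = ∅ by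
        ext i; simp [ZMod.val_zero]]
      simp
    have key : ∀ i : Fin n, σ (c i + 1) - σ (c i) = d i := by
      intro i
      have h1 : c i + 1 = (((i.1 + 1 : ℕ)) : ZMod n) := by rw [hc]; push_cast; ring
      rcases Nat.lt_or_ge (i.1 + 1) n with h | h
      · have hv : (((i.1 + 1 : ℕ)) : ZMod n).val = i.1 + 1 := ZMod.val_cast_of_lt h
        rw [hσ]
        simp only
        rw [h1, hv, hcv i]
        rw [show Finset.univ.filter (fun j : Fin n => j.1 < i.1 + 1) =
            insert i (Finset.univ.filter (fun j : Fin n => j.1 < i.1)) by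
          ext j; simp [Fin.ext_iff]; omega]
        rw [Finset.sum_insert (by simp)]
        ring
      · have hn' : i.1 + 1 = n := by omega
        have h2 : c i + 1 = 0 := by
          rw [h1, hn']
          exact ZMod.natCast_self n
        have huniv : (Finset.univ : Finset (Fin n)) =
            insert i (Finset.univ.filter (fun j : Fin n => j.1 < i.1)) := by
          ext j
          simp [Fin.ext_iff]
          omega
        have hsum : d i + ∑ j ∈ Finset.univ.filter (fun j : Fin n => j.1 < i.1), d j = 0 := by
          rw [← Finset.sum_insert (show i ∉ _ by simp), ← huniv]
          exact hd2
        rw [h2, σ0, hσ]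
        simp only
        rw [hcv i]
        linear_combination -hsum
    have hcond : ∀ j : ZMod n, σ (j + 1) ≠ σ j + (r : ZMod (2*r)) := by
      intro j heq
      have hj : c ⟨j.val, ZMod.val_lt j⟩ = j := ZMod.natCast_zmod_val j
      have := key ⟨j.val, ZMod.val_lt j⟩
      rw [hj, heq] at this
      exact hd1 _ (by rw [← this]; ring)
    refine ⟨⟨σ, hcond⟩, ?_⟩
    rw [hΦ]
    refine Prod.ext σ0 (Subtype.ext ?_)
    funext i
    exact key i
  have hbij : Function.Bijective Φ := ⟨hinj, hsurj⟩
  rw [Nat.card_eq_of_bijective Φ hbij, Nat.card_prod, Nat.card_zmod, Nat.card_eq_fintype_card]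
  rfl

/-- For all integers `r ≥ 1` and `n ≥ 1`, the number of functions `σ : ℤ/nℤ → ℤ/2rℤ`
satisfying `σ (i+1) ≠ σ i + r` for every `i` equals `(2r-1)^n + r + (r-1)*(-1)^n`. -/
theorem stmt0 (r n : ℕ) (hr : 1 ≤ r) (hn : 1 ≤ n) :
    (Nat.card {σ : ZMod n → ZMod (2 * r) //
        ∀ i : ZMod n, σ (i + 1) ≠ σ i + (r : ZMod (2 * r))} : ℤ) =
      (2 * (r : ℤ) - 1) ^ n + (r : ℤ) + ((r : ℤ) - 1) * (-1) ^ n := by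
  haveI : NeZero r := ⟨by omega⟩
  obtain ⟨m, rfl⟩ : ∃ m, n = m + 1 := ⟨n - 1, by omega⟩
  rw [card_cyclic r m]
  have h := (Fcnt_closed r (m+1)).1
  push_cast at h ⊢
  linarith
end

section
/- For every element w of the free group F₂ on two generators there exists a polynomial P_w ∈ ℤ[x, y, z] in three variables such that for all matrices A, B ∈ SL(2,ℝ), tr(w(A,B)) = P_w(tr A, tr B, tr(AB)). (Fricke trace identity: the trace of any word in two SL(2)-matrices is a universal integer polynomial in tr A, tr B, and tr AB.) -/
/-!
For `g ∈ SL(2, R)` over any commutative ring, `g⁻¹ = tr g • 1 - g`. This single identity gives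
`A * A = tr A • A - 1`, `B * A = (tr AB - tr A tr B) • 1 + tr B • A + tr A • B - A * B` and
`B * A * B = tr AB • B - A⁻¹`. So if `tr A`, `tr B` and `tr AB` lie in a subring `S`, the `S`-span
of `1, A, B, AB` is stable under left multiplication by `A^{±1}` and `B^{±1}`; it therefore contains
every word in `A` and `B`, and all its traces lie in `S`.

To get one polynomial for all pairs at once, apply this to the generic pair of matrices over the
ring of real functions on `SL(2, ℝ)²`, with `S` the image of `ℤ[x, y, z]` under
`x, y, z ↦ tr A, tr B, tr AB`, and then evaluate at the given pair.
-/

open Matrix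
open scoped MatrixGroups

namespace Matrix.SpecialLinearGroup

section FinTwo

variable {R : Type*} [CommRing R]

local notation:1024 "↑ₘ" A:1024 => ((A : SL(2, R)) : Matrix (Fin 2) (Fin 2) R)

theorem coe_inv_fin_two (g : SL(2, R)) : ↑ₘ(g⁻¹) = trace ↑ₘg • 1 - ↑ₘg := by
  rw [coe_inv, adjugate_fin_two, eta_fin_two ↑ₘg]
  ext i j
  fin_cases i <;> fin_cases j <;> simp [trace_fin_two]

theorem coe_mul_coe_inv (g : SL(2, R)) : ↑ₘg * ↑ₘ(g⁻¹) = 1 := by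
  rw [← coe_mul, mul_inv_cancel, coe_one]

theorem mul_self_fin_two (g : SL(2, R)) : ↑ₘg * ↑ₘg = trace ↑ₘg • ↑ₘg - 1 := by
  have h := coe_mul_coe_inv g
  rw [coe_inv_fin_two, mul_sub, mul_smul_comm, mul_one] at h
  rw [← h]
  abel

theorem mul_comm_fin_two (g h : SL(2, R)) :
    ↑ₘh * ↑ₘg = (trace (↑ₘg * ↑ₘh) - trace ↑ₘg * trace ↑ₘh) • 1 + trace ↑ₘh • ↑ₘg
      + trace ↑ₘg • ↑ₘh - ↑ₘg * ↑ₘh := by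
  have key : ↑ₘ((g * h)⁻¹) = ↑ₘ(h⁻¹ * g⁻¹) := by simp only [_root_.mul_inv_rev]
  rw [coe_mul, coe_inv_fin_two, coe_inv_fin_two, coe_inv_fin_two, coe_mul] at key
  rw [← sub_eq_zero, ← sub_eq_zero.2 key.symm]
  simp only [sub_mul, mul_sub, one_mul, smul_mul_assoc, mul_smul_comm, mul_one]
  module

theorem mul_mul_self_fin_two (g h : SL(2, R)) :
    ↑ₘh * (↑ₘg * ↑ₘh) = trace (↑ₘg * ↑ₘh) • ↑ₘh - ↑ₘ(g⁻¹) := by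
  have key := mul_self_fin_two (h * g)
  rw [coe_mul, trace_mul_comm] at key
  calc ↑ₘh * (↑ₘg * ↑ₘh) = ↑ₘh * ↑ₘg * (↑ₘh * ↑ₘg) * ↑ₘ(g⁻¹) := by
        rw [mul_assoc, mul_assoc, mul_assoc, coe_mul_coe_inv, mul_one, ← mul_assoc]
    _ = _ := by rw [key, sub_mul, smul_mul_assoc, one_mul, mul_assoc, coe_mul_coe_inv, mul_one]

variable (S : Subring R) (A B : SL(2, R))

def frickeSpan : Submodule S (Matrix (Fin 2) (Fin 2) R) :=
  Submodule.span S {1, ↑ₘA, ↑ₘB, ↑ₘA * ↑ₘB}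

variable {S A B}

theorem one_mem_frickeSpan : 1 ∈ frickeSpan S A B := Submodule.subset_span (by simp)

theorem fst_mem_frickeSpan : ↑ₘA ∈ frickeSpan S A B := Submodule.subset_span (by simp)

theorem snd_mem_frickeSpan : ↑ₘB ∈ frickeSpan S A B := Submodule.subset_span (by simp)

theorem fst_mul_snd_mem_frickeSpan : ↑ₘA * ↑ₘB ∈ frickeSpan S A B :=
  Submodule.subset_span (by simp)

theorem smul_mem_frickeSpan {c : R} (hc : c ∈ S) {X : Matrix (Fin 2) (Fin 2) R}
    (hX : X ∈ frickeSpan S A B) : c • X ∈ frickeSpan S A B :=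
  Submodule.smul_mem _ ⟨c, hc⟩ hX

theorem mul_mem_frickeSpan {M : Matrix (Fin 2) (Fin 2) R}
    (h : ∀ Y ∈ ({1, ↑ₘA, ↑ₘB, ↑ₘA * ↑ₘB} : Set (Matrix (Fin 2) (Fin 2) R)),
      M * Y ∈ frickeSpan S A B)
    {X : Matrix (Fin 2) (Fin 2) R} (hX : X ∈ frickeSpan S A B) : M * X ∈ frickeSpan S A B :=
  (Submodule.span_le (p := (frickeSpan S A B).comap (LinearMap.mulLeft S M))).2 h hX

theorem coe_inv_mul_mem_frickeSpan {g : SL(2, R)} (hg : trace ↑ₘg ∈ S)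
    (h : ∀ X ∈ frickeSpan S A B, ↑ₘg * X ∈ frickeSpan S A B) {X : Matrix (Fin 2) (Fin 2) R}
    (hX : X ∈ frickeSpan S A B) : ↑ₘ(g⁻¹) * X ∈ frickeSpan S A B := by
  rw [coe_inv_fin_two, sub_mul, smul_mul_assoc, one_mul]
  exact sub_mem (smul_mem_frickeSpan hg hX) (h X hX)

theorem fst_mul_mem_frickeSpan (hA : trace ↑ₘA ∈ S) {X : Matrix (Fin 2) (Fin 2) R}
    (hX : X ∈ frickeSpan S A B) : ↑ₘA * X ∈ frickeSpan S A B := by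
  refine mul_mem_frickeSpan (fun Y hY => ?_) hX
  rcases hY with rfl | rfl | rfl | rfl
  · simpa using fst_mem_frickeSpan
  · rw [mul_self_fin_two]
    exact sub_mem (smul_mem_frickeSpan hA fst_mem_frickeSpan) one_mem_frickeSpan
  · exact fst_mul_snd_mem_frickeSpan
  · rw [← mul_assoc, mul_self_fin_two, sub_mul, smul_mul_assoc, one_mul]
    exact sub_mem (smul_mem_frickeSpan hA fst_mul_snd_mem_frickeSpan) snd_mem_frickeSpan

theorem snd_mul_mem_frickeSpan (hA : trace ↑ₘA ∈ S) (hB : trace ↑ₘB ∈ S)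
    (hAB : trace (↑ₘA * ↑ₘB) ∈ S) {X : Matrix (Fin 2) (Fin 2) R}
    (hX : X ∈ frickeSpan S A B) : ↑ₘB * X ∈ frickeSpan S A B := by
  refine mul_mem_frickeSpan (fun Y hY => ?_) hX
  rcases hY with rfl | rfl | rfl | rfl
  · simpa using snd_mem_frickeSpan
  · rw [mul_comm_fin_two]
    refine sub_mem (add_mem (add_mem (smul_mem_frickeSpan ?_ one_mem_frickeSpan)
      (smul_mem_frickeSpan hB fst_mem_frickeSpan)) (smul_mem_frickeSpan hA snd_mem_frickeSpan))
      fst_mul_snd_mem_frickeSpan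
    exact sub_mem hAB (mul_mem hA hB)
  · rw [mul_self_fin_two]
    exact sub_mem (smul_mem_frickeSpan hB snd_mem_frickeSpan) one_mem_frickeSpan
  · have hA_inv := coe_inv_mul_mem_frickeSpan hA (fun _ => fst_mul_mem_frickeSpan hA)
      (one_mem_frickeSpan (S := S) (B := B))
    rw [mul_one] at hA_inv
    rw [mul_mul_self_fin_two]
    exact sub_mem (smul_mem_frickeSpan hAB snd_mem_frickeSpan) hA_inv

theorem coe_lift_mem_frickeSpan (hA : trace ↑ₘA ∈ S) (hB : trace ↑ₘB ∈ S)
    (hAB : trace (↑ₘA * ↑ₘB) ∈ S) (w : FreeGroup (Fin 2)) :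
    ↑ₘ(FreeGroup.lift ![A, B] w) ∈ frickeSpan S A B := by
  suffices ∀ X ∈ frickeSpan S A B, ↑ₘ(FreeGroup.lift ![A, B] w) * X ∈ frickeSpan S A B by
    simpa using this 1 one_mem_frickeSpan
  have generator_mul : ∀ i, ∀ X ∈ frickeSpan S A B, ↑ₘ(![A, B] i) * X ∈ frickeSpan S A B := by
    intro i
    fin_cases i
    · exact fun X => fst_mul_mem_frickeSpan hA
    · exact fun X => snd_mul_mem_frickeSpan hA hB hAB
  have generator_trace : ∀ i, trace ↑ₘ(![A, B] i) ∈ S := by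
    intro i
    fin_cases i
    exacts [hA, hB]
  induction w using FreeGroup.induction_on with
  | C1 => simp
  | of i => simpa using generator_mul i
  | inv_of i _ =>
    simpa using fun X => coe_inv_mul_mem_frickeSpan (generator_trace i) (generator_mul i)
  | mul x y hx hy => simpa [mul_assoc] using fun X hX => hx _ (hy X hX)

theorem trace_mem_of_mem_frickeSpan (hA : trace ↑ₘA ∈ S) (hB : trace ↑ₘB ∈ S)
    (hAB : trace (↑ₘA * ↑ₘB) ∈ S) {X : Matrix (Fin 2) (Fin 2) R}
    (hX : X ∈ frickeSpan S A B) : trace X ∈ S := by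
  induction hX using Submodule.span_induction with
  | mem Y hY =>
    rcases hY with rfl | rfl | rfl | rfl
    · simp
    exacts [hA, hB, hAB]
  | zero => simp
  | add Y Z _ _ hY hZ => simpa using add_mem hY hZ
  | smul c Y _ hY => simpa [Subring.smul_def] using mul_mem c.2 hY

theorem trace_lift_mem (hA : trace ↑ₘA ∈ S) (hB : trace ↑ₘB ∈ S)
    (hAB : trace (↑ₘA * ↑ₘB) ∈ S) (w : FreeGroup (Fin 2)) :
    trace ↑ₘ(FreeGroup.lift ![A, B] w) ∈ S :=
  trace_mem_of_mem_frickeSpan hA hB hAB (coe_lift_mem_frickeSpan hA hB hAB w)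

end FinTwo

section Generic

variable {n : Type*} [Fintype n] [DecidableEq n] {k : Type*} [CommRing k] {ι : Type*}

theorem trace_coe_apply (X : SpecialLinearGroup n ((ι → SpecialLinearGroup n k) → k))
    (g : ι → SpecialLinearGroup n k) :
    trace (X : Matrix n n ((ι → SpecialLinearGroup n k) → k)) g =
      trace (map (Pi.evalRingHom (fun _ => k) g) X : Matrix n n k) :=
  AddMonoidHom.map_trace (Pi.evalRingHom (fun _ => k) g) _

variable (n k ι) in
def generic (i : ι) : SpecialLinearGroup n ((ι → SpecialLinearGroup n k) → k) :=
  ⟨Matrix.of fun a b g => g i a b,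
    funext fun g => (RingHom.map_det (Pi.evalRingHom (fun _ => k) g) _).trans (g i).det_coe⟩

theorem map_generic (g : ι → SpecialLinearGroup n k) (i : ι) :
    map (Pi.evalRingHom (fun _ => k) g) (generic n k ι i) = g i := by
  ext; rfl

theorem map_lift_generic (g : ι → SpecialLinearGroup n k) (w : FreeGroup ι) :
    map (Pi.evalRingHom (fun _ => k) g) (FreeGroup.lift (generic n k ι) w) =
      FreeGroup.lift g w := by
  rw [← MonoidHom.comp_apply]
  congr 1
  exact FreeGroup.ext_hom _ _ fun i => by simp [map_generic]

theorem trace_lift_generic_apply (g : ι → SpecialLinearGroup n k) (w : FreeGroup ι) :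
    trace (FreeGroup.lift (generic n k ι) w : Matrix n n ((ι → SpecialLinearGroup n k) → k)) g =
      trace (FreeGroup.lift g w : Matrix n n k) := by
  rw [trace_coe_apply, map_lift_generic]

theorem trace_generic_apply (g : ι → SpecialLinearGroup n k) (i : ι) :
    trace (generic n k ι i : Matrix n n ((ι → SpecialLinearGroup n k) → k)) g =
      trace (g i : Matrix n n k) := by
  rw [trace_coe_apply, map_generic]

theorem trace_generic_mul_generic_apply (g : ι → SpecialLinearGroup n k) (i j : ι) :
    trace ((generic n k ι i * generic n k ι j : SpecialLinearGroup n _) :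
      Matrix n n ((ι → SpecialLinearGroup n k) → k)) g =
      trace ((g i * g j : SpecialLinearGroup n k) : Matrix n n k) := by
  rw [trace_coe_apply, map_mul, map_generic, map_generic]

end Generic

end Matrix.SpecialLinearGroup

/-- Fricke trace identity: for every word `w` in the free group on two generators there is a
universal integer polynomial `P` in three variables such that for all `A B ∈ SL(2,ℝ)`,
`tr (w(A,B)) = P (tr A, tr B, tr (A*B))`. -/
theorem stmt2 (w : FreeGroup (Fin 2)) :
    ∃ P : MvPolynomial (Fin 3) ℤ,
      ∀ A B : Matrix.SpecialLinearGroup (Fin 2) ℝ,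
        Matrix.trace
            (((FreeGroup.lift ![A, B]) w : Matrix.SpecialLinearGroup (Fin 2) ℝ) :
              Matrix (Fin 2) (Fin 2) ℝ) =
          MvPolynomial.aeval
            ![Matrix.trace (A : Matrix (Fin 2) (Fin 2) ℝ),
              Matrix.trace (B : Matrix (Fin 2) (Fin 2) ℝ),
              Matrix.trace ((A * B : Matrix.SpecialLinearGroup (Fin 2) ℝ) :
                Matrix (Fin 2) (Fin 2) ℝ)] P := by
  set 𝔸 := SpecialLinearGroup.generic (Fin 2) ℝ (Fin 2)
  set t : Fin 3 → (Fin 2 → SL(2, ℝ)) → ℝ :=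
    ![trace (𝔸 0 : Matrix (Fin 2) (Fin 2) _), trace (𝔸 1 : Matrix (Fin 2) (Fin 2) _),
      trace ((𝔸 0 * 𝔸 1 : SL(2, (Fin 2 → SL(2, ℝ)) → ℝ)) : Matrix (Fin 2) (Fin 2) _)]
  obtain ⟨P, hP⟩ : ∃ P : MvPolynomial (Fin 3) ℤ,
      MvPolynomial.aeval t P = trace (FreeGroup.lift 𝔸 w : Matrix (Fin 2) (Fin 2) _) := by
    rw [show 𝔸 = ![𝔸 0, 𝔸 1] by funext i; fin_cases i <;> rfl]
    refine SpecialLinearGroup.trace_lift_mem (S := (MvPolynomial.aeval t).range.toSubring)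
      ?_ ?_ ?_ w
    exacts [⟨.X 0, by simp [t]⟩, ⟨.X 1, by simp [t]⟩, ⟨.X 2, by simp [t]⟩]
  refine ⟨P, fun A B => ?_⟩
  have hP_AB := congrArg (Pi.evalAlgHom ℤ (fun _ => ℝ) ![A, B]) hP
  rw [MvPolynomial.comp_aeval_apply, Pi.evalAlgHom_apply,
    SpecialLinearGroup.trace_lift_generic_apply] at hP_AB
  rw [← hP_AB]
  congr 2
  funext i
  fin_cases i
  exacts [SpecialLinearGroup.trace_generic_apply ![A, B] 0,
    SpecialLinearGroup.trace_generic_apply ![A, B] 1,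
    SpecialLinearGroup.trace_generic_mul_generic_apply ![A, B] 0 1]
end

section
/- Given a Schottky datum with r ≥ 1 generators, the group homomorphism from the free group on r generators to SL(2,ℝ) sending the i-th generator to S_i is injective; that is, S₁, …, S_r freely generate a free subgroup of SL(2,ℝ). -/
/-- A Schottky datum with `r ≥ 1` generators: pairwise disjoint closed disks
`D̄ j = {z : dist z (center j) ≤ radius j}` (for `j ∈ ℤ/2rℤ`) centered on the real axis,
together with matrices `gen j ∈ SL(2,ℝ)` satisfying `gen (j + r) = (gen j)⁻¹`, such that for
each `j` the Möbius transformation of `gen j` is defined on all of `ℂ ∖ D j` (the complement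
of the open disk) and maps it into the open disk `D (j + r)`. -/
structure SchottkyDatum (r : ℕ) where
  center : ZMod (2 * r) → ℝ
  radius : ZMod (2 * r) → ℝ
  radius_pos : ∀ j, 0 < radius j
  disks_disjoint : ∀ i j, i ≠ j → ∀ z : ℂ,
    dist z (center i : ℂ) ≤ radius i → ¬ dist z (center j : ℂ) ≤ radius j
  gen : ZMod (2 * r) → Matrix.SpecialLinearGroup (Fin 2) ℝ
  gen_add_r : ∀ j, gen (j + (r : ZMod (2 * r))) = (gen j)⁻¹
  denom_ne_zero : ∀ j, ∀ z : ℂ, ¬ dist z (center j : ℂ) < radius j →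
    (((gen j : Matrix (Fin 2) (Fin 2) ℝ) 1 0 : ℂ) * z +
        ((gen j : Matrix (Fin 2) (Fin 2) ℝ) 1 1 : ℂ)) ≠ 0
  maps_into : ∀ j, ∀ z : ℂ, ¬ dist z (center j : ℂ) < radius j →
    dist
        ((((gen j : Matrix (Fin 2) (Fin 2) ℝ) 0 0 : ℂ) * z +
            ((gen j : Matrix (Fin 2) (Fin 2) ℝ) 0 1 : ℂ)) /
          (((gen j : Matrix (Fin 2) (Fin 2) ℝ) 1 0 : ℂ) * z +
            ((gen j : Matrix (Fin 2) (Fin 2) ℝ) 1 1 : ℂ)))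
        ((center (j + (r : ZMod (2 * r))) : ℂ)) <
      radius (j + (r : ZMod (2 * r)))

/-- The element `T_σ = S_{σ(0)} S_{σ(1)} ⋯ S_{σ(n-1)}` associated to a word
`σ : ℤ/nℤ → ℤ/2rℤ`. -/
def Tword {r : ℕ} (D : SchottkyDatum r) {n : ℕ} (σ : ZMod n → ZMod (2 * r)) :
    Matrix.SpecialLinearGroup (Fin 2) ℝ :=
  ((List.finRange n).map fun i => D.gen (σ ((i : ℕ) : ZMod n))).prod

/-!
Ping-pong in the upper half-plane `ℍ`, where `SL(2,ℝ)` acts by Möbius transformations without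
poles. A point `τ` high above the real axis lies outside every disk. If the reduced word of
`w ≠ 1` begins with a letter standing for `S_j`, then `w • τ` lies in the open disk `D (j + r)`,
by induction on the word: `S_j` maps everything outside `D j` into `D (j + r)`, and reducedness
says the rest of the word has put the point into some `D (k + r)` with `k + r ≠ j`, which is
disjoint from `D j`. Hence `w • τ ≠ τ`.
-/

open UpperHalfPlane Metric

lemma ZMod.natCast_add_self_eq_zero (r : ℕ) : (r : ZMod (2 * r)) + r = 0 := by
  rw [← Nat.cast_add, ← two_mul, ZMod.natCast_self]

namespace SchottkyDatum

variable {r : ℕ} (D : SchottkyDatum r)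

lemma gen_smul_mem_ball {j : ZMod (2 * r)} {τ : ℍ}
    (hτ : (τ : ℂ) ∉ ball (D.center j : ℂ) (D.radius j)) :
    ((D.gen j • τ : ℍ) : ℂ) ∈ ball (D.center (j + r) : ℂ) (D.radius (j + r)) := by
  rw [coe_specialLinearGroup_apply]
  simpa using D.maps_into j τ hτ

lemma exists_forall_notMem_closedBall [NeZero (2 * r)] :
    ∃ τ : ℍ, ∀ j, (τ : ℂ) ∉ closedBall (D.center j : ℂ) (D.radius j) := by
  obtain ⟨M, hM⟩ := (Set.finite_range D.radius).bddAbove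
  refine ⟨⟨((|M| + 1 : ℝ) : ℂ) * Complex.I, by simp; positivity⟩, fun j hj => ?_⟩
  have hle : |M| + 1 ≤ dist (((|M| + 1 : ℝ) : ℂ) * Complex.I) (D.center j : ℂ) := by
    simpa [Complex.dist_eq, abs_of_pos (by positivity : (0 : ℝ) < |M| + 1)] using
      Complex.abs_im_le_norm (((|M| + 1 : ℝ) : ℂ) * Complex.I - D.center j)
  have hj' : D.radius j ≤ M := hM ⟨j, rfl⟩
  linarith [le_abs_self M, mem_closedBall.mp hj]

/-- `b ≠ a + r` says that `S_a` is not followed by its inverse `S_b`. -/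
lemma prod_smul_mem_ball {τ : ℍ} (hτ : ∀ j, (τ : ℂ) ∉ closedBall (D.center j : ℂ) (D.radius j)) :
    ∀ (j : ZMod (2 * r)) (L : List (ZMod (2 * r))),
      (j :: L).IsChain (fun a b => b ≠ a + (r : ZMod (2 * r))) →
      ((((j :: L).map D.gen).prod • τ : ℍ) : ℂ) ∈ ball (D.center (j + r) : ℂ) (D.radius (j + r))
  | j, [], _ => by
    rw [List.map_singleton, List.prod_singleton]
    exact D.gen_smul_mem_ball fun h => hτ j (ball_subset_closedBall h)
  | j, k :: L, hchain => by
    rw [List.isChain_cons_cons] at hchain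
    have hk := prod_smul_mem_ball hτ k L hchain.2
    have hkj : k + r ≠ j := fun e => hchain.1 <| by
      rw [← e, add_assoc, ZMod.natCast_add_self_eq_zero, add_zero]
    rw [List.map_cons, List.prod_cons, mul_smul]
    exact D.gen_smul_mem_ball fun hj =>
      D.disks_disjoint _ _ hkj _ (ball_subset_closedBall hk) (ball_subset_closedBall hj)

/-- The letter `(i, true)` of `FreeGroup (Fin r)` stands for `S_i`, and `(i, false)` for
`S_i⁻¹ = S_{i+r}`. -/
def letterIndex (r : ℕ) (p : Fin r × Bool) : ZMod (2 * r) :=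
  ((p.1 + cond p.2 0 r : ℕ) : ZMod (2 * r))

lemma letterIndex_injective (r : ℕ) : Function.Injective (letterIndex r) := by
  rintro ⟨i, a⟩ ⟨j, b⟩ h
  have hlt : ∀ (k : Fin r) (c : Bool), (k : ℕ) + cond c 0 r < 2 * r := by
    intro k c
    cases c <;> simp <;> omega
  have hval := congrArg ZMod.val h
  simp only [letterIndex, ZMod.val_cast_of_lt (hlt _ _)] at hval
  cases a <;> cases b <;> simp [Fin.ext_iff] at hval ⊢ <;> omega

lemma letterIndex_not (p : Fin r × Bool) :
    letterIndex r (p.1, !p.2) = letterIndex r p + r := by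
  rcases p with ⟨i, _ | _⟩ <;> simp [letterIndex, add_assoc, ZMod.natCast_add_self_eq_zero]

lemma gen_letterIndex (p : Fin r × Bool) :
    D.gen (letterIndex r p) = cond p.2 (D.gen (p.1 : ℕ)) (D.gen (p.1 : ℕ))⁻¹ := by
  rcases p with ⟨i, _ | _⟩ <;> simp [letterIndex, D.gen_add_r]

lemma lift_eq_prod_map_toWord (w : FreeGroup (Fin r)) :
    FreeGroup.lift (fun i : Fin r => D.gen ((i : ℕ) : ZMod (2 * r))) w =
      ((w.toWord.map (letterIndex r)).map D.gen).prod := by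
  conv_lhs => rw [← FreeGroup.mk_toWord (x := w)]
  simp only [FreeGroup.lift_mk, List.map_map, Function.comp_def, gen_letterIndex]

lemma isChain_map_letterIndex {L : List (Fin r × Bool)} (hL : FreeGroup.IsReduced L) :
    (L.map (letterIndex r)).IsChain (fun a b => b ≠ a + (r : ZMod (2 * r))) :=
  List.isChain_map_of_isChain _ (fun p q hpq hqp => by
    have hq : q = (p.1, !p.2) := letterIndex_injective r (hqp.trans (letterIndex_not p).symm)
    simp [hq] at hpq) hL

lemma lift_smul_mem_ball {τ : ℍ}
    (hτ : ∀ j, (τ : ℂ) ∉ closedBall (D.center j : ℂ) (D.radius j))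
    {w : FreeGroup (Fin r)} {p : Fin r × Bool} {L : List (Fin r × Bool)} (hw : w.toWord = p :: L) :
    ((FreeGroup.lift (fun i : Fin r => D.gen ((i : ℕ) : ZMod (2 * r))) w • τ : ℍ) : ℂ) ∈
      ball (D.center (letterIndex r p + r) : ℂ) (D.radius (letterIndex r p + r)) := by
  have hchain := isChain_map_letterIndex (hw ▸ FreeGroup.isReduced_toWord)
  rw [List.map_cons] at hchain
  rw [lift_eq_prod_map_toWord, hw, List.map_cons]
  exact D.prod_smul_mem_ball hτ _ _ hchain

end SchottkyDatum

/-- Given a Schottky datum with `r ≥ 1` generators, the homomorphism from the free group on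
`r` generators to `SL(2,ℝ)` sending the `i`-th generator to `S i` is injective; that is, the
generators freely generate a free subgroup of `SL(2,ℝ)`. -/
theorem stmt8 (r : ℕ) (hr : 1 ≤ r) (D : SchottkyDatum r) :
    Function.Injective
      (FreeGroup.lift fun i : Fin r => D.gen ((i : ℕ) : ZMod (2 * r))) := by
  have : NeZero (2 * r) := ⟨by omega⟩
  obtain ⟨τ, hτ⟩ := D.exists_forall_notMem_closedBall
  refine (injective_iff_map_eq_one _).mpr fun w hw => ?_
  by_contra hne
  obtain ⟨p, L, hpL⟩ := List.exists_cons_of_ne_nil (mt FreeGroup.toWord_eq_nil_iff.mp hne)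
  have hball := D.lift_smul_mem_ball hτ hpL
  rw [hw, one_smul] at hball
  exact hτ _ (ball_subset_closedBall hball)
end
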